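/- (Lower bound by exponential decay of the initial datum) Let g, h : [0,T] → ℝ be continuous with h(0) = h0, g(0) = −h0, h strictly increasing and g strictly decreasing (in the uniform-difference-quotient sense: inf_{0≤t1<t2≤T} (h(t2)−h(t1))/(t2−t1) > 0, sup_{0≤t1<t2≤T} (g(t2)−g(t1))/(t2−t1) < 0), and let v be the unique solution of the fixed-front problem ∂ₜv(t,x) = d∫_{g(t)}^{h(t)} J(x−y) v(t,y) dy − d·v(t,x) + f(t,x,v(t,x)) for 0 < t < T, g(t) < x < h(t), with v(t,g(t)) = v(t,h(t)) = 0 and v(0,·) = u0 on [−h0,h0], satisfying 0 < v ≤ M0 := max{ sup u0, K0 }. Then, with K(M0) a uniform Lipschitz constant for f(t,x,·) on [0,M0], one has v(t,x) ≥ e^{−(d + K(M0)) t} u0(x) for all x ∈ [−h0,h0] and t ∈ (0,T). -/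

import Mathlib

/-!
Since the fronts move strictly outward, a point `x ∈ [-h0, h0]` stays inside `(g s, h s)`
for all `s ∈ (0, T)`, so `φ s = v s x` obeys the equation there. The nonlocal term is
nonnegative because `v ≥ 0`, and `f s x (v s x) ≥ -K(M0) v s x` by the Lipschitz bound and
`f s x 0 = 0`; hence `φ' ≥ -(d + K(M0)) φ`, and `e^{(d + K(M0)) s} φ s` is nondecreasing.
-/

open MeasureTheory Set Filter Topology

/-- A solution of the nonlocal problem with prescribed (fixed) moving fronts `g, h`
on the time interval `[0, T)`. -/
def IsFixedFrontSol (d h0 T : ℝ) (J : ℝ → ℝ) (f : ℝ → ℝ → ℝ → ℝ)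
    (u0 : ℝ → ℝ) (g h : ℝ → ℝ) (v : ℝ → ℝ → ℝ) : Prop :=
  ContinuousOn (fun p : ℝ × ℝ => v p.1 p.2)
    {p : ℝ × ℝ | 0 ≤ p.1 ∧ p.1 < T ∧ g p.1 ≤ p.2 ∧ p.2 ≤ h p.1} ∧
  (∀ t x, 0 < t → t < T → g t < x → x < h t →
    HasDerivAt (fun s => v s x)
      (d * (∫ y in g t..h t, J (x - y) * v t y) - d * v t x + f t x (v t x)) t) ∧
  (∀ t, 0 < t → t < T → v t (g t) = 0 ∧ v t (h t) = 0) ∧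
  (∀ x, -h0 ≤ x → x ≤ h0 → v 0 x = u0 x)

theorem exp_mul_le_of_hasDerivAt_of_neg_mul_le {φ φ' : ℝ → ℝ} {a b c : ℝ} (hab : a ≤ b)
    (hφ : ContinuousOn φ (Icc a b)) (hφ' : ∀ s ∈ Ioo a b, HasDerivAt φ (φ' s) s)
    (hle : ∀ s ∈ Ioo a b, -c * φ s ≤ φ' s) :
    Real.exp (-c * (b - a)) * φ a ≤ φ b := by
  set ψ : ℝ → ℝ := fun s => Real.exp (c * s) * φ s
  have hψ' : ∀ s ∈ Ioo a b, HasDerivAt ψ (Real.exp (c * s) * (c * φ s + φ' s)) s := by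
    intro s hs
    exact (((hasDerivAt_id' s).const_mul c).exp.mul (hφ' s hs)).congr_deriv (by ring)
  have hψ_mono : MonotoneOn ψ (Icc a b) := by
    refine monotoneOn_of_deriv_nonneg (convex_Icc a b) (by fun_prop) ?_ ?_ <;>
      rw [interior_Icc] <;> intro s hs
    · exact (hψ' s hs).differentiableAt.differentiableWithinAt
    · rw [(hψ' s hs).deriv]
      exact mul_nonneg (Real.exp_pos _).le (by linarith [hle s hs])
  calc Real.exp (-c * (b - a)) * φ a = Real.exp (-c * b) * ψ a := by
        simp only [ψ, ← mul_assoc, ← Real.exp_add]; ring_nf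
    _ ≤ Real.exp (-c * b) * ψ b := by
        gcongr; exact hψ_mono (left_mem_Icc.2 hab) (right_mem_Icc.2 hab) hab
    _ = φ b := by simp only [ψ, ← mul_assoc, ← Real.exp_add]; simp

theorem strictMonoOn_Icc_of_le_slope {h : ℝ → ℝ} {T : ℝ}
    (hslope : ∃ c > 0, ∀ t1 t2, 0 ≤ t1 → t1 < t2 → t2 ≤ T → c ≤ (h t2 - h t1) / (t2 - t1)) :
    StrictMonoOn h (Icc 0 T) := by
  obtain ⟨c, hc, hslope⟩ := hslope
  intro t1 ht1 t2 ht2 h12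
  have := hslope t1 t2 ht1.1 h12 ht2.2
  rw [le_div_iff₀ (sub_pos.2 h12)] at this
  nlinarith

theorem strictAntiOn_Icc_of_slope_le_neg {g : ℝ → ℝ} {T : ℝ}
    (hslope : ∃ c > 0, ∀ t1 t2, 0 ≤ t1 → t1 < t2 → t2 ≤ T → (g t2 - g t1) / (t2 - t1) ≤ -c) :
    StrictAntiOn g (Icc 0 T) := by
  obtain ⟨c, hc, hslope⟩ := hslope
  intro t1 ht1 t2 ht2 h12
  have := hslope t1 t2 ht1.1 h12 ht2.2
  rw [div_le_iff₀ (sub_pos.2 h12)] at this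
  nlinarith

namespace IsFixedFrontSol

variable {d h0 T : ℝ} {J : ℝ → ℝ} {f : ℝ → ℝ → ℝ → ℝ} {u0 g h : ℝ → ℝ} {v : ℝ → ℝ → ℝ}

theorem nonneg_of_mem_Icc (hsol : IsFixedFrontSol d h0 T J f u0 g h v) {M : ℝ}
    (hbd : ∀ t x, 0 < t → t < T → g t < x → x < h t → 0 < v t x ∧ v t x ≤ M)
    {t y : ℝ} (ht : 0 < t) (htT : t < T) (hy : y ∈ Icc (g t) (h t)) : 0 ≤ v t y := by
  rcases hy.1.eq_or_lt with rfl | hgy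
  · exact ((hsol.2.2.1 t ht htT).1).ge
  rcases hy.2.eq_or_lt with rfl | hyh
  · exact ((hsol.2.2.1 t ht htT).2).ge
  exact (hbd t y ht htT hgy hyh).1.le

theorem neg_mul_le_rhs (hsol : IsFixedFrontSol d h0 T J f u0 g h v)
    (hJnn : ∀ x, 0 ≤ J x) (hd : 0 ≤ d) (hf0 : ∀ t x, 0 ≤ t → f t x 0 = 0) {M K : ℝ}
    (hK : ∀ t x, 0 ≤ t → ∀ u1 ∈ Icc 0 M, ∀ u2 ∈ Icc 0 M, |f t x u1 - f t x u2| ≤ K * |u1 - u2|)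
    (hbd : ∀ t x, 0 < t → t < T → g t < x → x < h t → 0 < v t x ∧ v t x ≤ M)
    {t x : ℝ} (ht : 0 < t) (htT : t < T) (hgx : g t < x) (hxh : x < h t) :
    -(d + K) * v t x ≤ d * (∫ y in g t..h t, J (x - y) * v t y) - d * v t x + f t x (v t x) := by
  obtain ⟨hv_pos, hv_le⟩ := hbd t x ht htT hgx hxh
  have h_nonlocal : 0 ≤ ∫ y in g t..h t, J (x - y) * v t y :=
    intervalIntegral.integral_nonneg (hgx.trans hxh).le fun y hy =>
      mul_nonneg (hJnn _) (hsol.nonneg_of_mem_Icc hbd ht htT hy)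
  have h_reaction : -(K * v t x) ≤ f t x (v t x) := by
    have := hK t x ht.le _ ⟨hv_pos.le, hv_le⟩ 0 ⟨le_rfl, hv_pos.le.trans hv_le⟩
    rw [hf0 t x ht.le, sub_zero, sub_zero, abs_of_pos hv_pos] at this
    linarith [neg_abs_le (f t x (v t x))]
  nlinarith [mul_nonneg hd h_nonlocal]

theorem continuousOn_apply_const (hsol : IsFixedFrontSol d h0 T J f u0 g h v) {t x : ℝ}
    (htT : t < T) (hx : ∀ s ∈ Icc 0 t, g s ≤ x ∧ x ≤ h s) :
    ContinuousOn (fun s => v s x) (Icc 0 t) :=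
  hsol.1.comp (Continuous.continuousOn (f := fun s => (s, x)) (by fun_prop)) fun s hs =>
    ⟨hs.1, hs.2.trans_lt htT, hx s hs⟩

theorem exp_mul_le (hsol : IsFixedFrontSol d h0 T J f u0 g h v)
    (hJnn : ∀ x, 0 ≤ J x) (hd : 0 ≤ d) (hf0 : ∀ t x, 0 ≤ t → f t x 0 = 0) {M K : ℝ}
    (hK : ∀ t x, 0 ≤ t → ∀ u1 ∈ Icc 0 M, ∀ u2 ∈ Icc 0 M, |f t x u1 - f t x u2| ≤ K * |u1 - u2|)
    (hbd : ∀ t x, 0 < t → t < T → g t < x → x < h t → 0 < v t x ∧ v t x ≤ M)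
    {t x : ℝ} (ht : 0 ≤ t) (htT : t < T) (hx0 : g 0 ≤ x ∧ x ≤ h 0)
    (hx : ∀ s ∈ Ioc 0 t, g s < x ∧ x < h s) :
    Real.exp (-(d + K) * t) * v 0 x ≤ v t x := by
  have hx_Icc : ∀ s ∈ Icc 0 t, g s ≤ x ∧ x ≤ h s := fun s hs => by
    rcases hs.1.eq_or_lt with rfl | hs0
    · exact hx0
    · exact (hx s ⟨hs0, hs.2⟩).imp le_of_lt le_of_lt
  have hx_Ioo : ∀ s ∈ Ioo 0 t, g s < x ∧ x < h s := fun s hs => hx s (Ioo_subset_Ioc_self hs)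
  have := exp_mul_le_of_hasDerivAt_of_neg_mul_le ht (hsol.continuousOn_apply_const htT hx_Icc)
    (fun s hs => hsol.2.1 s x hs.1 (hs.2.trans htT) (hx_Ioo s hs).1 (hx_Ioo s hs).2)
    (fun s hs => hsol.neg_mul_le_rhs hJnn hd hf0 hK hbd hs.1 (hs.2.trans htT)
      (hx_Ioo s hs).1 (hx_Ioo s hs).2)
  simpa only [sub_zero] using this

end IsFixedFrontSol

theorem lower_bound_exp_decay_general
    (J : ℝ → ℝ) (hJnn : ∀ x, 0 ≤ J x)
    (f : ℝ → ℝ → ℝ → ℝ)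
    (hf0 : ∀ t x, 0 ≤ t → f t x 0 = 0)
    (d h0 T : ℝ) (hd : 0 < d)
    (u0 : ℝ → ℝ)
    (g h : ℝ → ℝ)
    (hh00 : h 0 = h0) (hg00 : g 0 = -h0)
    (hhinc : ∃ c > 0, ∀ t1 t2, 0 ≤ t1 → t1 < t2 → t2 ≤ T → c ≤ (h t2 - h t1) / (t2 - t1))
    (hgdec : ∃ c > 0, ∀ t1 t2, 0 ≤ t1 → t1 < t2 → t2 ≤ T → (g t2 - g t1) / (t2 - t1) ≤ -c)
    (M0 KM0 : ℝ)
    (hKM0 : ∀ t x, 0 ≤ t → ∀ u1 ∈ Set.Icc 0 M0, ∀ u2 ∈ Set.Icc 0 M0,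
      |f t x u1 - f t x u2| ≤ KM0 * |u1 - u2|)
    (v : ℝ → ℝ → ℝ)
    (hsol : IsFixedFrontSol d h0 T J f u0 g h v)
    (hbd : ∀ t x, 0 < t → t < T → g t < x → x < h t → 0 < v t x ∧ v t x ≤ M0) :
    ∀ x, -h0 ≤ x → x ≤ h0 → ∀ t, 0 < t → t < T →
      Real.exp (-(d + KM0) * t) * u0 x ≤ v t x := by
  intro x hx1 hx2 t ht htT
  have h_mono := strictMonoOn_Icc_of_le_slope hhinc
  have g_anti := strictAntiOn_Icc_of_slope_le_neg hgdec
  have h_inside : ∀ s ∈ Ioc 0 t, g s < x ∧ x < h s := fun s hs => by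
    have hs' : s ∈ Icc 0 T := ⟨hs.1.le, hs.2.trans htT.le⟩
    have h0' : (0 : ℝ) ∈ Icc 0 T := ⟨le_rfl, hs'.2.trans' hs'.1⟩
    exact ⟨(g_anti h0' hs' hs.1).trans_le (hg00 ▸ hx1),
      (hh00 ▸ hx2).trans_lt (h_mono h0' hs' hs.1)⟩
  rw [← hsol.2.2.2 x hx1 hx2]
  exact hsol.exp_mul_le hJnn hd.le hf0 hKM0 hbd ht.le htT ⟨hg00 ▸ hx1, hh00 ▸ hx2⟩ h_inside

/-- **Lower bound by exponential decay of the initial datum** (estimate (2.13) of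
Cao–Du–Li–Li). -/
theorem lower_bound_exp_decay
    (J : ℝ → ℝ) (hJc : Continuous J) (hJnn : ∀ x, 0 ≤ J x)
    (hJeven : ∀ x, J (-x) = J x) (hJbdd : BddAbove (Set.range J))
    (hJ0 : 0 < J 0) (hJint : Integrable J) (hJ1 : (∫ x, J x) = 1)
    (f : ℝ → ℝ → ℝ → ℝ)
    (hfc : ContinuousOn (fun p : ℝ × ℝ × ℝ => f p.1 p.2.1 p.2.2)
      {p : ℝ × ℝ × ℝ | 0 ≤ p.1 ∧ 0 ≤ p.2.2})
    (hf0 : ∀ t x, 0 ≤ t → f t x 0 = 0)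
    (hfLip : ∀ L > 0, ∃ K > 0, ∀ t x u1 u2, 0 ≤ t → u1 ∈ Set.Icc 0 L → u2 ∈ Set.Icc 0 L →
      |f t x u1 - f t x u2| ≤ K * |u1 - u2|)
    (K0 : ℝ) (hK0 : 0 < K0)
    (hfneg : ∀ t x u, 0 ≤ t → K0 ≤ u → f t x u < 0)
    (d h0 T : ℝ) (hd : 0 < d) (hh0 : 0 < h0) (hT : 0 < T)
    (u0 : ℝ → ℝ) (hu0c : ContinuousOn u0 (Set.Icc (-h0) h0))
    (hu0l : u0 (-h0) = 0) (hu0r : u0 h0 = 0)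
    (hu0pos : ∀ x, -h0 < x → x < h0 → 0 < u0 x)
    (g h : ℝ → ℝ)
    (hgc : ContinuousOn g (Set.Icc 0 T)) (hhc : ContinuousOn h (Set.Icc 0 T))
    (hh00 : h 0 = h0) (hg00 : g 0 = -h0)
    (hhinc : ∃ c > 0, ∀ t1 t2, 0 ≤ t1 → t1 < t2 → t2 ≤ T → c ≤ (h t2 - h t1) / (t2 - t1))
    (hgdec : ∃ c > 0, ∀ t1 t2, 0 ≤ t1 → t1 < t2 → t2 ≤ T → (g t2 - g t1) / (t2 - t1) ≤ -c)
    (M0 KM0 : ℝ)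
    (hM0 : M0 = max (sSup (u0 '' Set.Icc (-h0) h0)) K0)
    (hKM0 : ∀ t x, 0 ≤ t → ∀ u1 ∈ Set.Icc 0 M0, ∀ u2 ∈ Set.Icc 0 M0,
      |f t x u1 - f t x u2| ≤ KM0 * |u1 - u2|)
    (v : ℝ → ℝ → ℝ)
    (hsol : IsFixedFrontSol d h0 T J f u0 g h v)
    (hbd : ∀ t x, 0 < t → t < T → g t < x → x < h t → 0 < v t x ∧ v t x ≤ M0) :
    ∀ x, -h0 ≤ x → x ≤ h0 → ∀ t, 0 < t → t < T →
      Real.exp (-(d + KM0) * t) * u0 x ≤ v t x :=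
  lower_bound_exp_decay_general J hJnn f hf0 d h0 T hd u0 g h hh00 hg00 hhinc hgdec M0 KM0 hKM0 v
    hsol hbd
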